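/- Let v = (v_k)_{k≥1} be nonnegative reals with 0 < Σ_{k=1}^∞ v_k ≤ 1, and let V(x) := Σ_{k=1}^∞ v_k e^{−kx} − 1. Then for every x > 0: 0 ≤ 3·V'(x)²/V''(x) + V'(x)³/V''(x)² ≤ 3·V'(x)²/V''(x) ≤ 3. -/

import Mathlib

/-!
Write `M_p(x) = ∑_{k ≥ 1} k^p v_k e^{-kx}`, so that `V = M₀ - 1`, `V' = -M₁` and `V'' = M₂`
(termwise differentiation, justified by `k^p e^{-kx} ≤ p!/x^p`). In these terms the middle
expression is `M₁² (3 M₂ - M₁) / M₂²`, which is nonnegative because `M₁ ≤ M₂`, and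
`3 V'²/V'' = 3 M₁²/M₂ ≤ 3 M₀ ≤ 3` by the Cauchy–Schwarz inequality `M₁² ≤ M₀ M₂`.
-/

open Filter Topology Set

/-- The generating function of a (sub-)probability distribution `(v_k)_{k ≥ 1}`:
`V(x) = ∑_{k≥1} v_k e^(−kx) − 1`. -/
noncomputable def genFun (v : ℕ → ℝ) (x : ℝ) : ℝ :=
  (∑' k : ℕ, v (k + 1) * Real.exp (-((k : ℝ) + 1) * x)) - 1

theorem tsum_sq_le_tsum_mul_tsum_of_sq_le_mul {ι : Type*} {r f g : ι → ℝ}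
    (hf : ∀ i, 0 ≤ f i) (hg : ∀ i, 0 ≤ g i) (hr : ∀ i, r i ^ 2 ≤ f i * g i)
    (hfs : Summable f) (hgs : Summable g) :
    (∑' i, r i) ^ 2 ≤ (∑' i, f i) * ∑' i, g i := by
  have hfg : 0 ≤ (∑' i, f i) * ∑' i, g i := mul_nonneg (tsum_nonneg hf) (tsum_nonneg hg)
  by_cases hrs : Summable r
  · refine le_of_tendsto' (hrs.hasSum.pow 2) fun s => ?_
    calc (∑ i ∈ s, r i) ^ 2 ≤ (∑ i ∈ s, f i) * ∑ i ∈ s, g i :=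
          Finset.sum_sq_le_sum_mul_sum_of_sq_le_mul s (fun i _ => hf i) (fun i _ => hg i)
            fun i _ => hr i
      _ ≤ (∑' i, f i) * ∑' i, g i :=
          mul_le_mul (hfs.sum_le_tsum s fun i _ => hf i) (hgs.sum_le_tsum s fun i _ => hg i)
            (Finset.sum_nonneg fun i _ => hg i) (tsum_nonneg hf)
  · simpa [tsum_eq_zero_of_not_summable hrs] using hfg

theorem pow_mul_exp_neg_mul_le {t x : ℝ} (ht : 0 ≤ t) (hx : 0 < x) (p : ℕ) :
    t ^ p * Real.exp (-t * x) ≤ p.factorial / x ^ p := by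
  have h := Real.pow_div_factorial_le_exp (t * x) (by positivity) p
  rw [div_le_iff₀ (by positivity)] at h
  rw [le_div_iff₀ (by positivity), neg_mul, Real.exp_neg, ← div_eq_mul_inv, div_mul_eq_mul_div,
    div_le_iff₀ (Real.exp_pos _), ← mul_pow]
  linarith

noncomputable def genMomentTerm (v : ℕ → ℝ) (p : ℕ) (x : ℝ) (k : ℕ) : ℝ :=
  v (k + 1) * ((k : ℝ) + 1) ^ p * Real.exp (-((k : ℝ) + 1) * x)

noncomputable def genMoment (v : ℕ → ℝ) (p : ℕ) (x : ℝ) : ℝ :=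
  ∑' k, genMomentTerm v p x k

section GenMoment

variable {v : ℕ → ℝ}

theorem genMomentTerm_nonneg (hv : ∀ k, 0 ≤ v (k + 1)) (p : ℕ) (x : ℝ) (k : ℕ) :
    0 ≤ genMomentTerm v p x k := by
  have := hv k
  unfold genMomentTerm
  positivity

theorem genMomentTerm_le (hv : ∀ k, 0 ≤ v (k + 1)) (p : ℕ) {x : ℝ} (hx : 0 < x) (k : ℕ) :
    genMomentTerm v p x k ≤ v (k + 1) * (p.factorial / x ^ p) := by
  rw [genMomentTerm, mul_assoc]
  exact mul_le_mul_of_nonneg_left (pow_mul_exp_neg_mul_le (by positivity) hx p) (hv k)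

theorem summable_genMomentTerm (hv : ∀ k, 0 ≤ v (k + 1)) (hsum : Summable fun k => v (k + 1))
    (p : ℕ) {x : ℝ} (hx : 0 < x) : Summable (genMomentTerm v p x) :=
  .of_nonneg_of_le (genMomentTerm_nonneg hv p x) (genMomentTerm_le hv p hx) (hsum.mul_right _)

theorem hasDerivAt_genMomentTerm (v : ℕ → ℝ) (p : ℕ) (x : ℝ) (k : ℕ) :
    HasDerivAt (fun y => genMomentTerm v p y k) (-genMomentTerm v (p + 1) x k) x := by
  have h := ((hasDerivAt_id x).const_mul (-((k : ℝ) + 1))).exp.const_mul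
    (v (k + 1) * ((k : ℝ) + 1) ^ p)
  unfold genMomentTerm
  exact h.congr_deriv (by simp only [id, mul_one]; ring)

theorem hasDerivAt_genMoment (hv : ∀ k, 0 ≤ v (k + 1)) (hsum : Summable fun k => v (k + 1))
    (p : ℕ) {x : ℝ} (hx : 0 < x) :
    HasDerivAt (genMoment v p) (-genMoment v (p + 1) x) x := by
  have hx_mem : x ∈ Ioi (x / 2) := by simp only [mem_Ioi]; linarith
  have hdom : ∀ k, ∀ y ∈ Ioi (x / 2),
      ‖-genMomentTerm v (p + 1) y k‖ ≤ v (k + 1) * ((p + 1).factorial / (x / 2) ^ (p + 1)) := by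
    intro k y hy
    have hy0 : 0 < y := by simp only [mem_Ioi] at hy; linarith
    rw [norm_neg, Real.norm_of_nonneg (genMomentTerm_nonneg hv _ y k)]
    refine (genMomentTerm_le hv (p + 1) hy0 k).trans (mul_le_mul_of_nonneg_left ?_ (hv k))
    gcongr
    exact le_of_lt hy
  have h := hasDerivAt_tsum_of_isPreconnected (hsum.mul_right _) isOpen_Ioi isPreconnected_Ioi
    (fun k y _ => hasDerivAt_genMomentTerm v p y k) hdom hx_mem
    (summable_genMomentTerm hv hsum p hx) hx_mem
  rwa [tsum_neg] at h

theorem genMoment_nonneg (hv : ∀ k, 0 ≤ v (k + 1)) (p : ℕ) (x : ℝ) : 0 ≤ genMoment v p x :=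
  tsum_nonneg (genMomentTerm_nonneg hv p x)

theorem genMoment_mono (hv : ∀ k, 0 ≤ v (k + 1)) (hsum : Summable fun k => v (k + 1))
    {p q : ℕ} (hpq : p ≤ q) {x : ℝ} (hx : 0 < x) : genMoment v p x ≤ genMoment v q x := by
  refine (summable_genMomentTerm hv hsum p hx).tsum_le_tsum (fun k => ?_)
    (summable_genMomentTerm hv hsum q hx)
  have := hv k
  unfold genMomentTerm
  gcongr
  linarith [(k.cast_nonneg : (0 : ℝ) ≤ k)]

theorem genMoment_zero_le_tsum (hv : ∀ k, 0 ≤ v (k + 1)) (hsum : Summable fun k => v (k + 1))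
    {x : ℝ} (hx : 0 ≤ x) : genMoment v 0 x ≤ ∑' k, v (k + 1) := by
  have hle : ∀ k, genMomentTerm v 0 x k ≤ v (k + 1) := fun k => by
    rw [genMomentTerm, pow_zero, mul_one]
    refine mul_le_of_le_one_right (hv k) (Real.exp_le_one_iff.mpr ?_)
    nlinarith [(k.cast_nonneg : (0 : ℝ) ≤ k)]
  exact (Summable.of_nonneg_of_le (genMomentTerm_nonneg hv 0 x) hle hsum).tsum_le_tsum hle hsum

theorem genMoment_one_sq_le (hv : ∀ k, 0 ≤ v (k + 1)) (hsum : Summable fun k => v (k + 1))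
    {x : ℝ} (hx : 0 < x) : genMoment v 1 x ^ 2 ≤ genMoment v 0 x * genMoment v 2 x :=
  tsum_sq_le_tsum_mul_tsum_of_sq_le_mul (genMomentTerm_nonneg hv 0 x)
    (genMomentTerm_nonneg hv 2 x) (fun k => le_of_eq (by unfold genMomentTerm; ring))
    (summable_genMomentTerm hv hsum 0 hx) (summable_genMomentTerm hv hsum 2 hx)

theorem genFun_eq_genMoment_zero_sub_one (v : ℕ → ℝ) :
    genFun v = fun x => genMoment v 0 x - 1 := by
  funext x
  simp only [genFun, genMoment, genMomentTerm, pow_zero, mul_one]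

theorem deriv_genFun (hv : ∀ k, 0 ≤ v (k + 1)) (hsum : Summable fun k => v (k + 1))
    {x : ℝ} (hx : 0 < x) : deriv (genFun v) x = -genMoment v 1 x := by
  rw [genFun_eq_genMoment_zero_sub_one]
  exact ((hasDerivAt_genMoment hv hsum 0 hx).sub_const 1).deriv

theorem iteratedDeriv_two_genFun (hv : ∀ k, 0 ≤ v (k + 1)) (hsum : Summable fun k => v (k + 1))
    {x : ℝ} (hx : 0 < x) : iteratedDeriv 2 (genFun v) x = genMoment v 2 x := by
  have h : deriv (genFun v) =ᶠ[𝓝 x] -genMoment v 1 :=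
    eventually_of_mem (Ioi_mem_nhds hx) fun y hy => deriv_genFun hv hsum hy
  rw [iteratedDeriv_succ, iteratedDeriv_one, h.deriv_eq,
    (hasDerivAt_genMoment hv hsum 1 hx).neg.deriv, neg_neg]

end GenMoment

theorem increment_bounds_of_le_of_sq_le {A B : ℝ} (hA : 0 ≤ A) (hAB : A ≤ 3 * B) (hA2 : A ^ 2 ≤ B) :
    0 ≤ 3 * (-A) ^ 2 / B + (-A) ^ 3 / B ^ 2 ∧
      3 * (-A) ^ 2 / B + (-A) ^ 3 / B ^ 2 ≤ 3 * (-A) ^ 2 / B ∧ 3 * (-A) ^ 2 / B ≤ 3 := by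
  rcases (sq_nonneg A).trans hA2 |>.eq_or_lt with hB | hB
  · -- `B = 0`: every quotient vanishes by the convention `x / 0 = 0`.
    subst hB
    simp
  have hsplit : 3 * (-A) ^ 2 / B + (-A) ^ 3 / B ^ 2 = A ^ 2 * (3 * B - A) / B ^ 2 := by
    field_simp
    ring
  refine ⟨?_, ?_, ?_⟩
  · rw [hsplit]
    exact div_nonneg (mul_nonneg (sq_nonneg A) (by linarith)) (sq_nonneg B)
  · have : (-A) ^ 3 / B ^ 2 ≤ 0 :=
      div_nonpos_of_nonpos_of_nonneg (by nlinarith [sq_nonneg A]) (sq_nonneg B)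
    linarith
  · rw [neg_sq, div_le_iff₀ hB]
    linarith

theorem genFun_E_increment_bounds_general (v : ℕ → ℝ)
    (hnn : ∀ k : ℕ, 1 ≤ k → 0 ≤ v k)
    (hsummable : Summable (fun k : ℕ => v (k + 1)))
    (hle : (∑' k : ℕ, v (k + 1)) ≤ 1) :
    ∀ x : ℝ, 0 < x →
      0 ≤ 3 * (deriv (genFun v) x) ^ 2 / iteratedDeriv 2 (genFun v) x
          + (deriv (genFun v) x) ^ 3 / (iteratedDeriv 2 (genFun v) x) ^ 2 ∧
      3 * (deriv (genFun v) x) ^ 2 / iteratedDeriv 2 (genFun v) x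
          + (deriv (genFun v) x) ^ 3 / (iteratedDeriv 2 (genFun v) x) ^ 2
        ≤ 3 * (deriv (genFun v) x) ^ 2 / iteratedDeriv 2 (genFun v) x ∧
      3 * (deriv (genFun v) x) ^ 2 / iteratedDeriv 2 (genFun v) x ≤ 3 := by
  intro x hx
  have hv : ∀ k, 0 ≤ v (k + 1) := fun k => hnn (k + 1) k.succ_pos
  rw [deriv_genFun hv hsummable hx, iteratedDeriv_two_genFun hv hsummable hx]
  have hM₀ : genMoment v 0 x ≤ 1 := (genMoment_zero_le_tsum hv hsummable hx.le).trans hle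
  refine increment_bounds_of_le_of_sq_le (genMoment_nonneg hv 1 x) ?_ ?_
  · linarith [genMoment_mono hv hsummable one_le_two hx, genMoment_nonneg hv 2 x]
  · calc genMoment v 1 x ^ 2 ≤ genMoment v 0 x * genMoment v 2 x :=
          genMoment_one_sq_le hv hsummable hx
      _ ≤ 1 * genMoment v 2 x := mul_le_mul_of_nonneg_right hM₀ (genMoment_nonneg hv 2 x)
      _ = genMoment v 2 x := one_mul _

/-- for a nonzero sub-probability distribution,
`0 ≤ 3V'(x)²/V''(x) + V'(x)³/V''(x)² ≤ 3V'(x)²/V''(x) ≤ 3` for all `x > 0`. -/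
theorem genFun_E_increment_bounds (v : ℕ → ℝ)
    (hnn : ∀ k : ℕ, 1 ≤ k → 0 ≤ v k)
    (hsummable : Summable (fun k : ℕ => v (k + 1)))
    (hpos : 0 < ∑' k : ℕ, v (k + 1))
    (hle : (∑' k : ℕ, v (k + 1)) ≤ 1) :
    ∀ x : ℝ, 0 < x →
      0 ≤ 3 * (deriv (genFun v) x) ^ 2 / iteratedDeriv 2 (genFun v) x
          + (deriv (genFun v) x) ^ 3 / (iteratedDeriv 2 (genFun v) x) ^ 2 ∧
      3 * (deriv (genFun v) x) ^ 2 / iteratedDeriv 2 (genFun v) x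
          + (deriv (genFun v) x) ^ 3 / (iteratedDeriv 2 (genFun v) x) ^ 2
        ≤ 3 * (deriv (genFun v) x) ^ 2 / iteratedDeriv 2 (genFun v) x ∧
      3 * (deriv (genFun v) x) ^ 2 / iteratedDeriv 2 (genFun v) x ≤ 3 :=
  genFun_E_increment_bounds_general v hnn hsummable hle
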